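/- In the Chevalley-Eilenberg complex of the 7-dimensional Lie algebra above, α7 ∧ (dα7)^2 ∧ α1 = -2 α1∧α2∧α3∧α5∧α6∧α7 = 2 d(α2∧α4∧α5∧α6∧α7); in particular α7 ∧ (dα7)^2 ∧ α1 is exact. -/

import Mathlib

/-!
Everything is a finite computation in the exterior algebra: expanding, sorting each monomial by
anticommutation and discarding those with a repeated factor. The 2-forms in `dα7` commute, so
`(dα7)² = 2(α1α2α3α4 + α1α4α5α6 + α2α3α5α6)`, and wedging with `α7` and `α1` leaves only the last
term. On the other side every term of `dα7` repeats a factor of `α2α4α5α6`, so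
`d(α2α4α5α6α7) = -α2 ∧ dα4 ∧ α5α6α7 = -α1α2α3α5α6α7`.
-/

/-- The dual basis 1-forms `α1,…,α7` of the 7-dimensional Lie algebra, viewed in the
exterior algebra `Λ g*`. -/
noncomputable def a7 (i : Fin 7) : ExteriorAlgebra ℝ (Module.Dual ℝ (Fin 7 → ℝ)) :=
  ExteriorAlgebra.ι ℝ (LinearMap.proj i)

/-- `dα4 = -α1∧α3`. -/
noncomputable def da4 : ExteriorAlgebra ℝ (Module.Dual ℝ (Fin 7 → ℝ)) := -(a7 0 * a7 2)

/-- `dα7 = -α1∧α4 - α2∧α3 - α5∧α6`. -/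
noncomputable def da7 : ExteriorAlgebra ℝ (Module.Dual ℝ (Fin 7 → ℝ)) :=
  -(a7 0 * a7 3) - a7 1 * a7 2 - a7 4 * a7 5

namespace ExteriorAlgebra

variable {R M : Type*} [CommRing R] [AddCommGroup M] [Module R M]

theorem ι_mul_ι_comm (x y : M) : ι R x * ι R y = -(ι R y * ι R x) :=
  eq_neg_of_add_eq_zero_left (ι_add_mul_swap x y)

theorem ι_mul_ι_mul_self (x : M) (a : ExteriorAlgebra R M) : ι R x * (ι R x * a) = 0 := by
  rw [← mul_assoc, ι_sq_zero, zero_mul]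

theorem ι_mul_ι_mul_comm (x y : M) (a : ExteriorAlgebra R M) :
    ι R x * (ι R y * a) = -(ι R y * (ι R x * a)) := by
  rw [← mul_assoc, ι_mul_ι_comm, neg_mul, mul_assoc]

end ExteriorAlgebra

theorem a7_mul_self (i : Fin 7) : a7 i * a7 i = 0 :=
  ExteriorAlgebra.ι_sq_zero _

theorem a7_mul_a7_mul_self (i : Fin 7) (a : ExteriorAlgebra ℝ (Module.Dual ℝ (Fin 7 → ℝ))) :
    a7 i * (a7 i * a) = 0 :=
  ExteriorAlgebra.ι_mul_ι_mul_self _ _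

/-- With `decide` discharging the order hypothesis, `simp` uses this and the next lemma to sort
monomials by increasing index without looping. -/
theorem a7_mul_a7_of_lt {i j : Fin 7} (_ : j < i) : a7 i * a7 j = -(a7 j * a7 i) :=
  ExteriorAlgebra.ι_mul_ι_comm _ _

theorem a7_mul_a7_mul_of_lt {i j : Fin 7} (_ : j < i)
    (a : ExteriorAlgebra ℝ (Module.Dual ℝ (Fin 7 → ℝ))) :
    a7 i * (a7 j * a) = -(a7 j * (a7 i * a)) :=
  ExteriorAlgebra.ι_mul_ι_mul_comm _ _ _

theorem da7_mul_da7 :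
    da7 * da7 = (2 : ℝ) • (a7 0 * a7 1 * a7 2 * a7 3 + a7 0 * a7 3 * a7 4 * a7 5 +
      a7 1 * a7 2 * a7 4 * a7 5) := by
  simp only [da7, mul_assoc, mul_sub, sub_mul, mul_neg, neg_mul]
  simp (disch := decide) only [a7_mul_self, a7_mul_a7_of_lt, a7_mul_a7_mul_of_lt, mul_zero,
    neg_neg, mul_neg, neg_zero]
  module

theorem a7_six_mul_da7_mul_da7_mul_a7_zero :
    a7 6 * da7 * da7 * a7 0 = (-2 : ℝ) • (a7 0 * a7 1 * a7 2 * a7 4 * a7 5 * a7 6) := by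
  rw [mul_assoc (a7 6), da7_mul_da7]
  simp only [mul_assoc, mul_add, add_mul, mul_smul_comm, smul_mul_assoc]
  simp (disch := decide) only [a7_mul_a7_mul_self, a7_mul_a7_of_lt, a7_mul_a7_mul_of_lt,
    mul_zero, neg_neg, mul_neg, neg_zero, add_zero, zero_add]
  module

theorem a7_one_mul_da4_mul :
    a7 1 * da4 * a7 4 * a7 5 * a7 6 = a7 0 * a7 1 * a7 2 * a7 4 * a7 5 * a7 6 := by
  simp only [da4, mul_assoc, mul_neg, neg_mul]
  simp (disch := decide) only [a7_mul_a7_mul_of_lt, neg_neg]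

theorem a7_mul_a7_mul_a7_mul_a7_mul_da7_eq_zero : a7 1 * a7 3 * a7 4 * a7 5 * da7 = 0 := by
  simp only [da7, mul_assoc, mul_sub, mul_neg]
  simp (disch := decide) only [a7_mul_self, a7_mul_a7_mul_self, a7_mul_a7_of_lt,
    a7_mul_a7_mul_of_lt, mul_zero, neg_zero, sub_zero, neg_neg, mul_neg]

/-- `α7 ∧ (dα7)² ∧ α1 = -2 α1∧α2∧α3∧α5∧α6∧α7 = 2 d(α2∧α4∧α5∧α6∧α7)`, where the
differential of the decomposable 5-cochain is computed by the derivation rule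
(`dα2 = dα5 = dα6 = 0`); in particular `α7 ∧ (dα7)² ∧ α1` is exact. -/
theorem stmt16 :
    a7 6 * da7 * da7 * a7 0 = (-2 : ℝ) • (a7 0 * a7 1 * a7 2 * a7 4 * a7 5 * a7 6) ∧
    a7 6 * da7 * da7 * a7 0 =
      (2 : ℝ) • (-(a7 1 * da4 * a7 4 * a7 5 * a7 6) + a7 1 * a7 3 * a7 4 * a7 5 * da7) := by
  refine ⟨a7_six_mul_da7_mul_da7_mul_a7_zero, ?_⟩
  rw [a7_six_mul_da7_mul_da7_mul_a7_zero, a7_one_mul_da4_mul,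
    a7_mul_a7_mul_a7_mul_a7_mul_da7_eq_zero, add_zero, neg_smul, smul_neg]
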